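/- (Fractional Bourgain–Brezis inequality in 1D) Let u be a distribution on S¹ such that both (-Δ)^{1/4}u and R(-Δ)^{1/4}u belong to Ḣ^{-1/2}(S¹) + L¹(S¹). Then u minus its mean value belongs to L²(S¹), and ‖u - ⨍u‖_{L²} ≤ C(‖(-Δ)^{1/4}u‖_{Ḣ^{-1/2}+L¹} + ‖R(-Δ)^{1/4}u‖_{Ḣ^{-1/2}+L¹}) for a constant C independent of u. -/

import Mathlib

open MeasureTheory Complex

instance : Fact (0 < 2 * Real.pi) := ⟨by positivity⟩

noncomputable section
namespace BBaux
def wr (r : ℝ) (n : ℤ) : ℝ := if n = 0 then 0 else r ^ n.natAbs / (n : ℝ)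


lemma abs_wr_le {r : ℝ} (hr0 : 0 ≤ r) (n : ℤ) : |wr r n| ≤ r ^ n.natAbs := by
  unfold wr
  split
  · simp [pow_nonneg hr0]
  · rename_i h
    rw [abs_div, _root_.abs_pow, _root_.abs_of_nonneg hr0]
    have h1 : (1 : ℝ) ≤ |(n : ℝ)| := by
      rw [← Int.cast_abs, ← Int.cast_one, Int.cast_le]
      exact Int.one_le_abs (by exact_mod_cast h)
    calc r ^ n.natAbs / |(n:ℝ)| ≤ r ^ n.natAbs / 1 := by
          apply div_le_div_of_nonneg_left ?_ ?_ h1 <;> positivity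
      _ = r ^ n.natAbs := by ring

lemma summable_geom_int {r : ℝ} (hr0 : 0 ≤ r) (hr1 : r < 1) :
    Summable (fun n : ℤ => r ^ n.natAbs) := by
  apply Summable.of_nat_of_neg_add_one
  · simpa using summable_geometric_of_lt_one hr0 hr1
  · have : (fun n : ℕ => r ^ ((-((n : ℤ) + 1)).natAbs)) = fun n : ℕ => r * r ^ n := by
      funext n
      have : (-((n : ℤ) + 1)).natAbs = n + 1 := by
        omega
      rw [this, pow_succ]; ring
    rw [this]
    exact (summable_geometric_of_lt_one hr0 hr1).mul_left r

lemma summable_wr_mul {r : ℝ} (hr0 : 0 ≤ r) (hr1 : r < 1) {a : ℤ → ℝ} {M : ℝ}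
    (ha : ∀ n, |a n| ≤ M) : Summable (fun n : ℤ => wr r n * a n) := by
  apply Summable.of_norm_bounded (g := fun n : ℤ => r ^ n.natAbs * M) ((summable_geom_int hr0 hr1).mul_right M)
  intro n
  rw [Real.norm_eq_abs, abs_mul]
  have h1 := abs_wr_le hr0 n
  have h2 := ha n
  have h3 : (0:ℝ) ≤ |a n| := abs_nonneg _
  nlinarith [abs_nonneg (wr r n), pow_nonneg hr0 n.natAbs]


lemma kernel_hasSum {r : ℝ} (hr0 : 0 ≤ r) (hr1 : r < 1) (t : ℝ) :
    ∃ w : ℂ, w.re > 0 ∧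
      HasSum (fun n : ℤ => (wr r n : ℂ) * fourier n ((t : ℝ) : AddCircle (2 * Real.pi)))
        ((starRingEnd ℂ) (Complex.log w) - Complex.log w) := by
  set ζ : ℂ := Complex.exp (t * I) with hζdef
  have hζabs : ‖ζ‖ = 1 := by
    rw [hζdef, Complex.norm_exp]; simp
  have hfour : ∀ n : ℤ, fourier n ((t : ℝ) : AddCircle (2 * Real.pi)) = ζ ^ n := by
    intro n
    rw [fourier_coe_apply, ← Complex.exp_int_mul]
    congr 1
    have hpi : (Real.pi : ℂ) ≠ 0 := by simp [Real.pi_ne_zero]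
    field_simp
    push_cast
    ring
  set q : ℂ := (r : ℂ) * ζ with hq
  set q' : ℂ := (r : ℂ) * (starRingEnd ℂ) ζ with hq'
  have hqn : ‖q‖ < 1 := by
    rw [hq, norm_mul, hζabs, Complex.norm_real, Real.norm_eq_abs, _root_.abs_of_nonneg hr0]
    simpa using hr1
  have hq'n : ‖q'‖ < 1 := by
    rw [hq', norm_mul, RCLike.norm_conj, hζabs, Complex.norm_real, Real.norm_eq_abs,
      _root_.abs_of_nonneg hr0]
    simpa using hr1
  have hζne : ζ ≠ 0 := Complex.exp_ne_zero _
  have hA : HasSum (fun k : ℕ =>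
      (wr r (k : ℤ) : ℂ) * fourier (k : ℤ) ((t : ℝ) : AddCircle (2 * Real.pi)))
      (-Complex.log (1 - q)) := by
    have h1 := hasSum_taylorSeries_neg_log hqn
    have he : (fun k : ℕ => (wr r (k : ℤ) : ℂ) * fourier (k : ℤ) ((t:ℝ) : AddCircle (2*Real.pi)))
        = fun k : ℕ => q ^ k / (k : ℂ) := by
      funext k
      rw [hfour]
      cases k with
      | zero => simp [wr]
      | succ m =>
        rw [wr, if_neg (by exact_mod_cast Nat.succ_ne_zero m)]
        have h2 : ((m + 1 : ℕ) : ℤ).natAbs = m + 1 := by omega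
        rw [h2, zpow_natCast]
        push_cast
        rw [hq, mul_pow]
        ring
    rw [he]
    exact h1
  have hB : HasSum (fun k : ℕ =>
      (wr r (-((k : ℤ) + 1)) : ℂ) * fourier (-((k : ℤ) + 1)) ((t : ℝ) : AddCircle (2 * Real.pi)))
      (Complex.log (1 - q')) := by
    have h1 := hasSum_taylorSeries_neg_log hq'n
    have h2 : HasSum (fun k : ℕ => q' ^ (k + 1) / ((k : ℂ) + 1))
        (-Complex.log (1 - q')) := by
      have h3 := (hasSum_nat_add_iff' (f := fun m : ℕ => q' ^ m / (m : ℂ)) 1).mpr h1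
      simp only [Finset.range_one, Finset.sum_singleton, pow_zero, Nat.cast_zero, div_zero,
        sub_zero] at h3
      convert h3 using 2 with k
      · rfl
      push_cast
      ring
    have he : (fun k : ℕ =>
        (wr r (-((k : ℤ) + 1)) : ℂ) * fourier (-((k : ℤ) + 1)) ((t:ℝ) : AddCircle (2*Real.pi)))
        = fun k : ℕ => -(q' ^ (k + 1) / ((k : ℂ) + 1)) := by
      funext k
      rw [hfour]
      have hna : (-((k : ℤ) + 1)).natAbs = k + 1 := by omega
      rw [wr, if_neg (by omega), hna]
      have hz1 : ζ ^ (-((k : ℤ) + 1)) = (ζ ^ (k + 1 : ℕ))⁻¹ := by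
        rw [zpow_neg]
        norm_cast
      have hz2 : (ζ ^ (k + 1 : ℕ))⁻¹ = ((starRingEnd ℂ) ζ) ^ (k + 1 : ℕ) := by
        rw [inv_eq_conj (by rw [norm_pow, hζabs, one_pow]), map_pow]
      rw [hz1, hz2, hq', mul_pow]
      push_cast
      field_simp
    rw [he]
    simpa using h2.neg
  refine ⟨1 - q, ?_, ?_⟩
  · have h1 : q.re ≤ ‖q‖ := by
      exact Complex.re_le_norm q
    simp only [Complex.sub_re, Complex.one_re]
    linarith
  · have hconj : 1 - q' = (starRingEnd ℂ) (1 - q) := by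
      rw [map_sub, map_one, hq, hq', map_mul, Complex.conj_ofReal]
  -- arg ≠ π
    have hre : (1 - q).re > 0 := by
      have h1 : q.re ≤ ‖q‖ := by
        exact Complex.re_le_norm q
      simp only [Complex.sub_re, Complex.one_re]
      linarith
    have harg : (1 - q).arg ≠ Real.pi := by
      intro h
      have := (Complex.arg_eq_pi_iff.mp h).1
      linarith
    have hlog : Complex.log (1 - q') = (starRingEnd ℂ) (Complex.log (1 - q)) := by
      rw [hconj, Complex.log_conj _ harg]
    have htot := HasSum.of_nat_of_neg_add_one
      (f := fun n : ℤ => (wr r n : ℂ) * fourier n ((t : ℝ) : AddCircle (2 * Real.pi))) hA hB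
    rw [hlog] at htot
    have heq : (starRingEnd ℂ) (Complex.log (1 - q)) - Complex.log (1 - q)
        = -Complex.log (1 - q) + (starRingEnd ℂ) (Complex.log (1 - q)) := by ring
    rw [heq]
    exact htot

lemma kernel_bound {r : ℝ} (hr0 : 0 ≤ r) (hr1 : r < 1) (z : AddCircle (2 * Real.pi)) :
    ‖∑' n : ℤ, (wr r n : ℂ) * fourier n z‖ ≤ 2 * Real.pi := by
  induction z using QuotientAddGroup.induction_on with
  | H t =>
  obtain ⟨w, _, hsum⟩ := kernel_hasSum hr0 hr1 t
  rw [hsum.tsum_eq]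
  set L := Complex.log w with hL
  calc ‖(starRingEnd ℂ) L - L‖ = ‖L - (starRingEnd ℂ) L‖ := by
        rw [← norm_neg]; congr 1; ring
    _ = ‖((2 * L.im : ℝ) : ℂ) * I‖ := by rw [Complex.sub_conj]
    _ = |2 * L.im| := by
        rw [norm_mul, Complex.norm_I, mul_one, Complex.norm_real, Real.norm_eq_abs]
    _ = 2 * |L.im| := by rw [abs_mul, _root_.abs_two]
    _ ≤ 2 * Real.pi := by
        have : L.im = w.arg := Complex.log_im w
        rw [this]
        have := Complex.abs_arg_le_pi w
        linarith

lemma summable_kernel {r : ℝ} (hr0 : 0 ≤ r) (hr1 : r < 1) (z : AddCircle (2 * Real.pi)) :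
    Summable (fun n : ℤ => (wr r n : ℂ) * fourier n z) := by
  induction z using QuotientAddGroup.induction_on with
  | H t =>
  obtain ⟨w, _, hsum⟩ := kernel_hasSum hr0 hr1 t
  exact hsum.summable

lemma fourierCoeff_def (g : AddCircle (2 * Real.pi) → ℂ) (n : ℤ) :
    fourierCoeff g n = ∫ x, fourier (-n) x • g x ∂AddCircle.haarAddCircle := rfl

lemma norm_fourier_apply (n : ℤ) (x : AddCircle (2 * Real.pi)) : ‖fourier n x‖ = 1 :=
  Circle.norm_coe _

lemma norm_fourierCoeff_le (g : AddCircle (2 * Real.pi) → ℂ) (n : ℤ) :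
    ‖fourierCoeff g n‖ ≤ ∫ x, ‖g x‖ ∂AddCircle.haarAddCircle := by
  rw [fourierCoeff_def]
  refine (norm_integral_le_integral_norm _).trans_eq ?_
  congr 1
  funext x
  rw [norm_smul, norm_fourier_apply, one_mul]

lemma integrable_conj' {μ : Measure (AddCircle (2 * Real.pi))} {g : AddCircle (2 * Real.pi) → ℂ}
    (hg : Integrable g μ) : Integrable (fun y => (starRingEnd ℂ) (g y)) μ := by
  refine ⟨(continuous_star.comp_aestronglyMeasurable hg.1 : ), ?_⟩
  have h2 := hg.2
  simpa [MeasureTheory.HasFiniteIntegral] using h2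

lemma conj_fourierCoeff (g : AddCircle (2 * Real.pi) → ℂ) (n : ℤ) :
    (starRingEnd ℂ) (fourierCoeff g n)
      = ∫ y, fourier n y * (starRingEnd ℂ) (g y) ∂AddCircle.haarAddCircle := by
  rw [fourierCoeff_def, ← integral_conj]
  congr 1
  funext y
  rw [smul_eq_mul, map_mul]
  congr 1
  rw [fourier_neg]
  simp

lemma core (g : AddCircle (2 * Real.pi) → ℂ) (hg : Integrable g AddCircle.haarAddCircle)
    {r : ℝ} (hr0 : 0 ≤ r) (hr1 : r < 1) :
    |∑' n : ℤ, wr r n * ‖fourierCoeff g n‖ ^ 2|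
      ≤ 2 * Real.pi * (∫ x, ‖g x‖ ∂AddCircle.haarAddCircle) ^ 2 := by
  set μ := (AddCircle.haarAddCircle : Measure (AddCircle (2 * Real.pi))) with hμ
  set M : ℝ := ∫ x, ‖g x‖ ∂μ with hMdef
  have hM0 : 0 ≤ M := integral_nonneg (fun x => norm_nonneg _)
  set c : ℤ → ℂ := fun n => fourierCoeff g n with hc
  have hcM : ∀ n, ‖c n‖ ≤ M := fun n => norm_fourierCoeff_le g n
  have hS : Summable (fun n : ℤ => wr r n * ‖c n‖ ^ 2) := by
    apply summable_wr_mul hr0 hr1 (M := M ^ 2)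
    intro n
    rw [_root_.abs_of_nonneg (by positivity)]
    have := hcM n
    nlinarith [norm_nonneg (c n)]
  set S : ℝ := ∑' n : ℤ, wr r n * ‖c n‖ ^ 2 with hSdef
  have hZ : HasSum (fun n : ℤ => ((wr r n * ‖c n‖ ^ 2 : ℝ) : ℂ)) ((S : ℂ)) :=
    hS.hasSum.mapL Complex.ofRealCLM
  -- the inner function h y
  set h : AddCircle (2 * Real.pi) → ℂ := fun y => ∑' n : ℤ, (wr r n : ℂ) * c n * fourier n y
    with hhdef
  -- step: bound on ‖h y‖
  have hhy : ∀ y, ‖h y‖ ≤ 2 * Real.pi * M := by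
    intro y
    have hF'int : ∀ n : ℤ, Integrable
        (fun x => (wr r n : ℂ) * fourier n y * fourier (-n) x * g x) μ := by
      intro n
      have h1 : Integrable (fun x => fourier (-n) x * g x) μ :=
        hg.bdd_mul ((map_continuous (fourier (-n))).aestronglyMeasurable)
          (Filter.Eventually.of_forall fun x => le_of_eq (norm_fourier_apply _ _))
      have := h1.const_mul ((wr r n : ℂ) * fourier n y)
      refine this.congr (Filter.Eventually.of_forall fun x => ?_)
      ring
    have hF'sum : Summable (fun n : ℤ =>
        ∫ x, ‖(wr r n : ℂ) * fourier n y * fourier (-n) x * g x‖ ∂μ) := by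
      apply Summable.of_nonneg_of_le
        (fun n => integral_nonneg fun x => norm_nonneg _)
        (fun n => ?_) ((summable_geom_int hr0 hr1).mul_right M)
      have hb : ∀ x, ‖(wr r n : ℂ) * fourier n y * fourier (-n) x * g x‖
          ≤ r ^ n.natAbs * ‖g x‖ := by
        intro x
        rw [norm_mul, norm_mul, norm_mul, norm_fourier_apply, norm_fourier_apply,
          Complex.norm_real, Real.norm_eq_abs]
        have := abs_wr_le hr0 n
        have hg0 : (0:ℝ) ≤ ‖g x‖ := norm_nonneg _
        nlinarith [abs_nonneg (wr r n), pow_nonneg hr0 n.natAbs]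
      calc ∫ x, ‖(wr r n : ℂ) * fourier n y * fourier (-n) x * g x‖ ∂μ
          ≤ ∫ x, r ^ n.natAbs * ‖g x‖ ∂μ :=
            integral_mono_of_nonneg (Filter.Eventually.of_forall fun x => norm_nonneg _)
              (hg.norm.const_mul _) (Filter.Eventually.of_forall hb)
        _ = r ^ n.natAbs * M := by rw [integral_const_mul _ _]
    have hswap := MeasureTheory.hasSum_integral_of_summable_integral_norm hF'int hF'sum
    -- identify the terms
    have hterm : ∀ n : ℤ, (∫ x, (wr r n : ℂ) * fourier n y * fourier (-n) x * g x ∂μ)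
        = (wr r n : ℂ) * c n * fourier n y := by
      intro n
      have : ∀ x, (wr r n : ℂ) * fourier n y * fourier (-n) x * g x
          = ((wr r n : ℂ) * fourier n y) * (fourier (-n) x • g x) := by
        intro x; rw [smul_eq_mul]; ring
      simp_rw [this]
      rw [integral_const_mul _ _, ← fourierCoeff_def]
      ring
    have hhseq : h y = ∫ x, ∑' n : ℤ, (wr r n : ℂ) * fourier n y * fourier (-n) x * g x ∂μ := by
      rw [hhdef]
      simp only
      rw [← hswap.tsum_eq]
      exact tsum_congr fun n => (hterm n).symm
    rw [hhseq]
    -- kernel rewriting and bound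
    have hker : ∀ x, ∑' n : ℤ, (wr r n : ℂ) * fourier n y * fourier (-n) x * g x
        = (∑' n : ℤ, (wr r n : ℂ) * fourier n (y - x)) * g x := by
      intro x
      rw [← tsum_mul_right]
      refine tsum_congr fun n => ?_
      have hfm : fourier n y * fourier (-n) x = fourier n (y - x) := by
        have h1 : fourier n (y - x) = fourier n y * fourier n (-x) := by
          rw [fourier_apply, fourier_apply, fourier_apply, ← Circle.coe_mul,
            ← AddCircle.toCircle_add, ← smul_add, sub_eq_add_neg]
        have h2 : fourier n (-x) = fourier (-n) x := by
          rw [fourier_apply, fourier_apply, smul_neg, ← neg_smul]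
        rw [h1, h2]
      rw [← hfm]; ring
    calc ‖∫ x, ∑' n : ℤ, (wr r n : ℂ) * fourier n y * fourier (-n) x * g x ∂μ‖
        ≤ ∫ x, 2 * Real.pi * ‖g x‖ ∂μ := by
          apply norm_integral_le_of_norm_le (hg.norm.const_mul _)
          refine Filter.Eventually.of_forall fun x => ?_
          rw [hker x, norm_mul]
          have := kernel_bound hr0 hr1 (y - x)
          have hg0 : (0:ℝ) ≤ ‖g x‖ := norm_nonneg _
          have hk0 : (0:ℝ) ≤ ‖∑' n : ℤ, (wr r n : ℂ) * fourier n (y - x)‖ := norm_nonneg _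
          nlinarith
      _ = 2 * Real.pi * M := by rw [integral_const_mul _ _]
  -- outer swap
  have hFint : ∀ n : ℤ, Integrable
      (fun y => (wr r n : ℂ) * c n * fourier n y * (starRingEnd ℂ) (g y)) μ := by
    intro n
    have h1 : Integrable (fun y => fourier n y * (starRingEnd ℂ) (g y)) μ :=
      (integrable_conj' hg).bdd_mul ((map_continuous (fourier n)).aestronglyMeasurable)
        (Filter.Eventually.of_forall fun x => le_of_eq (norm_fourier_apply _ _))
    have := h1.const_mul ((wr r n : ℂ) * c n)
    refine this.congr (Filter.Eventually.of_forall fun x => ?_)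
    ring
  have hFsum : Summable (fun n : ℤ =>
      ∫ y, ‖(wr r n : ℂ) * c n * fourier n y * (starRingEnd ℂ) (g y)‖ ∂μ) := by
    apply Summable.of_nonneg_of_le
      (fun n => integral_nonneg fun x => norm_nonneg _)
      (fun n => ?_) (((summable_geom_int hr0 hr1).mul_right M).mul_right M)
    have hb : ∀ y, ‖(wr r n : ℂ) * c n * fourier n y * (starRingEnd ℂ) (g y)‖
        ≤ r ^ n.natAbs * M * ‖g y‖ := by
      intro y
      rw [norm_mul, norm_mul, norm_mul, norm_fourier_apply, RCLike.norm_conj,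
        Complex.norm_real, Real.norm_eq_abs]
      have h1 := abs_wr_le hr0 n
      have h2 := hcM n
      have hg0 : (0:ℝ) ≤ ‖g y‖ := norm_nonneg _
      have hc0 : (0:ℝ) ≤ ‖c n‖ := norm_nonneg _
      have hw0 : (0:ℝ) ≤ |wr r n| := abs_nonneg _
      have hp0 : (0:ℝ) ≤ r ^ n.natAbs := pow_nonneg hr0 _
      have h3 : |wr r n| * ‖c n‖ ≤ r ^ n.natAbs * M := mul_le_mul h1 h2 hc0 hp0
      nlinarith [mul_le_mul_of_nonneg_right h3 hg0]
    calc ∫ y, ‖(wr r n : ℂ) * c n * fourier n y * (starRingEnd ℂ) (g y)‖ ∂μ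
        ≤ ∫ y, r ^ n.natAbs * M * ‖g y‖ ∂μ :=
          integral_mono_of_nonneg (Filter.Eventually.of_forall fun x => norm_nonneg _)
            (hg.norm.const_mul _) (Filter.Eventually.of_forall hb)
      _ = r ^ n.natAbs * M * M := by rw [integral_const_mul _ _]
  have hswap := MeasureTheory.hasSum_integral_of_summable_integral_norm hFint hFsum
  have hterm : ∀ n : ℤ, (∫ y, (wr r n : ℂ) * c n * fourier n y * (starRingEnd ℂ) (g y) ∂μ)
      = ((wr r n * ‖c n‖ ^ 2 : ℝ) : ℂ) := by
    intro n
    have h1 : ∀ y, (wr r n : ℂ) * c n * fourier n y * (starRingEnd ℂ) (g y)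
        = ((wr r n : ℂ) * c n) * (fourier n y * (starRingEnd ℂ) (g y)) := by
      intro y; ring
    simp_rw [h1]
    rw [integral_const_mul _ _, ← conj_fourierCoeff]
    have h2 : c n * (starRingEnd ℂ) (c n) = ((‖c n‖ ^ 2 : ℝ) : ℂ) := by
      rw [Complex.mul_conj]
      norm_cast
      rw [Complex.normSq_eq_norm_sq]
    push_cast
    rw [mul_assoc, h2]
    push_cast
    ring
  have hZ2 : HasSum (fun n : ℤ => ((wr r n * ‖c n‖ ^ 2 : ℝ) : ℂ))
      (∫ y, ∑' n : ℤ, (wr r n : ℂ) * c n * fourier n y * (starRingEnd ℂ) (g y) ∂μ) := by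
    have heq := funext hterm
    rw [← heq]
    exact hswap
  have hSeq : (S : ℂ) = ∫ y, ∑' n : ℤ, (wr r n : ℂ) * c n * fourier n y
      * (starRingEnd ℂ) (g y) ∂μ := hZ.unique hZ2
  have habs : |S| ≤ 2 * Real.pi * M ^ 2 := by
    have h1 : |S| = ‖(S : ℂ)‖ := by rw [Complex.norm_real, Real.norm_eq_abs]
    rw [h1, hSeq]
    have hpt : ∀ y, ∑' n : ℤ, (wr r n : ℂ) * c n * fourier n y * (starRingEnd ℂ) (g y)
        = h y * (starRingEnd ℂ) (g y) := by
      intro y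
      rw [hhdef]
      simp only
      rw [← tsum_mul_right]
    calc ‖∫ y, ∑' n : ℤ, (wr r n : ℂ) * c n * fourier n y * (starRingEnd ℂ) (g y) ∂μ‖
        ≤ ∫ y, (2 * Real.pi * M) * ‖g y‖ ∂μ := by
          apply norm_integral_le_of_norm_le (hg.norm.const_mul _)
          refine Filter.Eventually.of_forall fun y => ?_
          rw [hpt y, norm_mul, RCLike.norm_conj]
          have := hhy y
          have hg0 : (0:ℝ) ≤ ‖g y‖ := norm_nonneg _
          have hh0 : (0:ℝ) ≤ ‖h y‖ := norm_nonneg _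
          nlinarith
      _ = (2 * Real.pi * M) * M := by rw [integral_const_mul _ _]
      _ = 2 * Real.pi * M ^ 2 := by ring
  exact habs

def Pside (g : AddCircle (2 * Real.pi) → ℂ) (n : ℤ) : ℝ :=
  if 0 < n then ‖fourierCoeff g n‖ ^ 2 / |(n : ℝ)| else 0

def Nside (g : AddCircle (2 * Real.pi) → ℂ) (n : ℤ) : ℝ :=
  if n < 0 then ‖fourierCoeff g n‖ ^ 2 / |(n : ℝ)| else 0

lemma Pside_nonneg (g : AddCircle (2 * Real.pi) → ℂ) (n : ℤ) : 0 ≤ Pside g n := by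
  unfold Pside; split <;> positivity

lemma Nside_nonneg (g : AddCircle (2 * Real.pi) → ℂ) (n : ℤ) : 0 ≤ Nside g n := by
  unfold Nside; split <;> positivity

lemma transfer_pos (g : AddCircle (2 * Real.pi) → ℂ) (hg : Integrable g AddCircle.haarAddCircle)
    (hP : Summable (Pside g)) :
    Summable (Nside g) ∧ ∑' n : ℤ, Nside g n ≤ ∑' n : ℤ, Pside g n
      + 2 * Real.pi * (∫ x, ‖g x‖ ∂AddCircle.haarAddCircle) ^ 2 := by
  set μ := (AddCircle.haarAddCircle : Measure (AddCircle (2 * Real.pi))) with hμ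
  set M : ℝ := ∫ x, ‖g x‖ ∂μ with hMdef
  have hM0 : 0 ≤ M := integral_nonneg (fun x => norm_nonneg _)
  set c : ℤ → ℂ := fun n => fourierCoeff g n with hc
  have hcM : ∀ n, ‖c n‖ ≤ M := fun n => norm_fourierCoeff_le g n
  set B : ℝ := 2 * Real.pi * M ^ 2 with hBdef
  -- main bound for each r < 1 and each finite set
  have key : ∀ F : Finset ℤ, ∀ r : ℝ, 0 ≤ r → r < 1 →
      ∑ n ∈ F, r ^ n.natAbs * Nside g n ≤ (∑' n : ℤ, Pside g n) + B := by
    intro F r hr0 hr1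
    have hW : Summable (fun n : ℤ => wr r n * ‖c n‖ ^ 2) := by
      apply summable_wr_mul hr0 hr1 (M := M ^ 2)
      intro n
      rw [_root_.abs_of_nonneg (by positivity)]
      have := hcM n
      nlinarith [norm_nonneg (c n)]
    have hrP : Summable (fun n : ℤ => r ^ n.natAbs * Pside g n) := by
      apply Summable.of_nonneg_of_le (fun n => by
        have := Pside_nonneg g n
        positivity) (fun n => ?_) hP
      have h1 : r ^ n.natAbs ≤ 1 := pow_le_one₀ hr0 hr1.le
      have h2 := Pside_nonneg g n
      nlinarith
    have hq : ∀ n : ℤ, r ^ n.natAbs * Nside g n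
        = r ^ n.natAbs * Pside g n - wr r n * ‖c n‖ ^ 2 := by
      intro n
      unfold Nside Pside wr
      rcases lt_trichotomy n 0 with hn | hn | hn
      · rw [if_pos hn, if_neg (by omega), if_neg (by omega)]
        have h1 : |(n:ℝ)| = -(n:ℝ) := by
          rw [abs_of_neg]; exact_mod_cast hn
        rw [h1, div_neg]
        ring
      · subst hn; simp
      · rw [if_neg (by omega), if_pos hn, if_neg (by omega)]
        have h1 : |(n:ℝ)| = (n:ℝ) := by
          rw [abs_of_pos]; exact_mod_cast hn
        rw [h1]
        ring
    have hqsum : Summable (fun n : ℤ => r ^ n.natAbs * Pside g n - wr r n * ‖c n‖ ^ 2) :=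
      hrP.sub hW
    have hqnn : ∀ n : ℤ, 0 ≤ r ^ n.natAbs * Pside g n - wr r n * ‖c n‖ ^ 2 := by
      intro n
      rw [← hq n]
      have := Nside_nonneg g n
      positivity
    have h5 : ∑ n ∈ F, r ^ n.natAbs * Nside g n
        ≤ ∑' n : ℤ, (r ^ n.natAbs * Pside g n - wr r n * ‖c n‖ ^ 2) := by
      calc ∑ n ∈ F, r ^ n.natAbs * Nside g n
          = ∑ n ∈ F, (r ^ n.natAbs * Pside g n - wr r n * ‖c n‖ ^ 2) :=
            Finset.sum_congr rfl (fun n _ => hq n)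
        _ ≤ _ := Summable.sum_le_tsum F (fun n _ => hqnn n) hqsum
    have h6 : ∑' n : ℤ, (r ^ n.natAbs * Pside g n - wr r n * ‖c n‖ ^ 2)
        = (∑' n : ℤ, r ^ n.natAbs * Pside g n) - ∑' n : ℤ, wr r n * ‖c n‖ ^ 2 :=
      Summable.tsum_sub hrP hW
    have h7 : (∑' n : ℤ, r ^ n.natAbs * Pside g n) ≤ ∑' n : ℤ, Pside g n := by
      apply Summable.tsum_le_tsum (fun n => ?_) hrP hP
      have h1 : r ^ n.natAbs ≤ 1 := pow_le_one₀ hr0 hr1.le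
      have h2 := Pside_nonneg g n
      nlinarith
    have h8 : -(∑' n : ℤ, wr r n * ‖c n‖ ^ 2) ≤ B := by
      have h10 : |∑' n : ℤ, wr r n * ‖c n‖ ^ 2| ≤ B := core g hg hr0 hr1
      have h9 := neg_abs_le (∑' n : ℤ, wr r n * ‖c n‖ ^ 2)
      linarith
    linarith
  -- pass to the limit r → 1
  have key2 : ∀ F : Finset ℤ, ∑ n ∈ F, Nside g n ≤ (∑' n : ℤ, Pside g n) + B := by
    intro F
    have hr : ∀ j : ℕ, (0:ℝ) ≤ 1 - 1 / ((j:ℝ) + 1) ∧ (1 - 1 / ((j:ℝ) + 1) : ℝ) < 1 := by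
      intro j
      constructor
      · have h1 : 1 / ((j:ℝ) + 1) ≤ 1 := by
          rw [div_le_one (by positivity)]
          simp
        linarith
      · have h1 : 0 < 1 / ((j:ℝ) + 1) := by positivity
        linarith
    have hlim : Filter.Tendsto (fun j : ℕ => ∑ n ∈ F, (1 - 1/((j:ℝ)+1)) ^ n.natAbs * Nside g n)
        Filter.atTop (nhds (∑ n ∈ F, Nside g n)) := by
      apply tendsto_finset_sum
      intro n _
      have h1 : Filter.Tendsto (fun j : ℕ => (1 - 1/((j:ℝ)+1))) Filter.atTop (nhds 1) := by
        have h2 := tendsto_one_div_add_atTop_nhds_zero_nat (𝕜 := ℝ)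
        have h3 := (tendsto_const_nhds (x := (1:ℝ)) (f := Filter.atTop (α := ℕ))).sub h2
        simpa using h3
      have h4 := (h1.pow n.natAbs).mul_const (Nside g n)
      simpa using h4
    apply le_of_tendsto hlim
    refine Filter.Eventually.of_forall fun j => ?_
    exact key F _ (hr j).1 (hr j).2
  have hNsum : Summable (Nside g) :=
    summable_of_sum_le (fun n => Nside_nonneg g n) key2
  exact ⟨hNsum, Summable.tsum_le_of_sum_le hNsum key2⟩

lemma fourierCoeff_conj (g : AddCircle (2 * Real.pi) → ℂ) (n : ℤ) :
    fourierCoeff (fun x => (starRingEnd ℂ) (g x)) n = (starRingEnd ℂ) (fourierCoeff g (-n)) := by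
  rw [fourierCoeff_def, fourierCoeff_def, ← integral_conj]
  congr 1
  funext x
  rw [smul_eq_mul, smul_eq_mul, map_mul, neg_neg, fourier_neg]

set_option maxHeartbeats 2000000 in
lemma transfer_neg (g : AddCircle (2 * Real.pi) → ℂ) (hg : Integrable g AddCircle.haarAddCircle)
    (hN : Summable (Nside g)) :
    Summable (Pside g) ∧ ∑' n : ℤ, Pside g n ≤ ∑' n : ℤ, Nside g n
      + 2 * Real.pi * (∫ x, ‖g x‖ ∂AddCircle.haarAddCircle) ^ 2 := by
  set g' : AddCircle (2 * Real.pi) → ℂ := fun x => (starRingEnd ℂ) (g x) with hg'def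
  have hg' : Integrable g' AddCircle.haarAddCircle := integrable_conj' hg
  have hPg' : Pside g' = fun n => Nside g (-n) := by
    funext n
    unfold Pside Nside
    rw [hg'def]
    rw [fourierCoeff_conj, RCLike.norm_conj]
    rcases lt_trichotomy n 0 with hn | hn | hn
    · rw [if_neg (by omega), if_neg (by omega)]
    · subst hn; simp
    · rw [if_pos hn, if_pos (by omega)]
      have : |((-n : ℤ) : ℝ)| = |(n:ℝ)| := by push_cast; rw [abs_neg]
      rw [this]
  have hNg' : Nside g' = fun n => Pside g (-n) := by
    funext n
    unfold Pside Nside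
    rw [hg'def]
    rw [fourierCoeff_conj, RCLike.norm_conj]
    rcases lt_trichotomy n 0 with hn | hn | hn
    · rw [if_pos hn, if_pos (by omega)]
      have : |((-n : ℤ) : ℝ)| = |(n:ℝ)| := by push_cast; rw [abs_neg]
      rw [this]
    · subst hn; simp
    · rw [if_neg (by omega), if_neg (by omega)]
  have hMeq : (∫ x, ‖g' x‖ ∂AddCircle.haarAddCircle) = ∫ x, ‖g x‖ ∂AddCircle.haarAddCircle := by
    rw [hg'def]
    simp only [RCLike.norm_conj]
  have hP'sum : Summable (Pside g') := by
    rw [hPg']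
    exact (Equiv.neg ℤ).summable_iff.mpr hN
  obtain ⟨hN'sum, hbound⟩ := transfer_pos g' hg' hP'sum
  rw [hNg'] at hN'sum
  rw [hNg', hPg', hMeq] at hbound
  have e1 : Summable (Pside g) := (Equiv.neg ℤ).summable_iff.mp hN'sum
  refine ⟨e1, ?_⟩
  have e2 : ∑' n : ℤ, Pside g (-n) = ∑' n : ℤ, Pside g n := by
    exact (Equiv.neg ℤ).tsum_eq (Pside g)
  have e3 : ∑' n : ℤ, Nside g (-n) = ∑' n : ℤ, Nside g n := by
    exact (Equiv.neg ℤ).tsum_eq (Nside g)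
  rw [e2, e3] at hbound
  exact hbound

lemma haar_eq : (AddCircle.haarAddCircle : Measure (AddCircle (2 * Real.pi)))
    = (ENNReal.ofReal (2 * Real.pi))⁻¹ • (volume : Measure (AddCircle (2 * Real.pi))) := by
  have h0 : ENNReal.ofReal (2 * Real.pi) ≠ 0 := by
    rw [Ne, ENNReal.ofReal_eq_zero]
    push_neg
    positivity
  rw [AddCircle.volume_eq_smul_haarAddCircle, smul_smul,
    ENNReal.inv_mul_cancel h0 ENNReal.ofReal_ne_top, one_smul]

lemma integrable_haar {g : AddCircle (2 * Real.pi) → ℂ} (hg : Integrable g volume) :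
    Integrable g AddCircle.haarAddCircle := by
  have h0 : ENNReal.ofReal (2 * Real.pi) ≠ 0 := by
    rw [Ne, ENNReal.ofReal_eq_zero]
    push_neg
    positivity
  rw [haar_eq]
  exact hg.smul_measure (by simpa [ENNReal.inv_ne_top] using h0)

lemma integral_norm_haar_le (g : AddCircle (2 * Real.pi) → ℂ) :
    ∫ x, ‖g x‖ ∂AddCircle.haarAddCircle ≤ ∫ x, ‖g x‖ ∂volume := by
  rw [haar_eq, integral_smul_measure]
  have h1 : ((ENNReal.ofReal (2 * Real.pi))⁻¹).toReal = (2 * Real.pi)⁻¹ := by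
    rw [ENNReal.toReal_inv, ENNReal.toReal_ofReal (by positivity)]
  rw [h1, smul_eq_mul]
  have h2 : 0 ≤ ∫ x, ‖g x‖ ∂(volume : Measure (AddCircle (2 * Real.pi))) :=
    integral_nonneg fun x => norm_nonneg _
  have h3 : (2 * Real.pi)⁻¹ ≤ 1 := by
    rw [inv_le_one₀ (by positivity)]
    nlinarith [Real.pi_gt_three]
  nlinarith

lemma integrable_fourier_mul {g : AddCircle (2 * Real.pi) → ℂ}
    (hg : Integrable g AddCircle.haarAddCircle) (n : ℤ) :
    Integrable (fun x => fourier n x * g x) AddCircle.haarAddCircle :=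
  hg.bdd_mul ((map_continuous (fourier n)).aestronglyMeasurable)
    (Filter.Eventually.of_forall fun x => le_of_eq (norm_fourier_apply _ _))

lemma fourierCoeff_add_mul {g₁ g₂ : AddCircle (2 * Real.pi) → ℂ}
    (h₁ : Integrable g₁ AddCircle.haarAddCircle) (h₂ : Integrable g₂ AddCircle.haarAddCircle)
    (a : ℂ) (n : ℤ) :
    fourierCoeff (fun x => g₁ x + a * g₂ x) n = fourierCoeff g₁ n + a * fourierCoeff g₂ n := by
  rw [fourierCoeff_def, fourierCoeff_def, fourierCoeff_def]
  have e1 := integrable_fourier_mul h₁ (-n)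
  have e2 := (integrable_fourier_mul h₂ (-n)).const_mul a
  have hpt : ∀ x, fourier (-n) x • (g₁ x + a * g₂ x)
      = fourier (-n) x * g₁ x + a * (fourier (-n) x * g₂ x) := by
    intro x; rw [smul_eq_mul]; ring
  simp_rw [hpt, smul_eq_mul]
  rw [integral_add e1 e2, integral_const_mul _ _]

lemma sq_bound {n : ℤ} (hn : n ≠ 0) {U A B C : ℝ} (hU : 0 ≤ U) (hA : 0 ≤ A) (hB : 0 ≤ B)
    (hC : 0 ≤ C) (h : 2 * Real.sqrt |(n : ℝ)| * U ≤ A + B + C) :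
    U ^ 2 ≤ A ^ 2 / |(n : ℝ)| + B ^ 2 / |(n : ℝ)| + C ^ 2 / |(n : ℝ)| := by
  have hd : (1:ℝ) ≤ |(n : ℝ)| := by
    rw [← Int.cast_abs]
    exact_mod_cast Int.one_le_abs hn
  have hs : Real.sqrt |(n : ℝ)| ^ 2 = |(n : ℝ)| := Real.sq_sqrt (by positivity)
  have hs0 : 0 ≤ Real.sqrt |(n : ℝ)| := Real.sqrt_nonneg _
  rw [← add_div, ← add_div, le_div_iff₀ (by linarith)]
  have h2 : (2 * Real.sqrt |(n : ℝ)| * U) * (2 * Real.sqrt |(n : ℝ)| * U)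
      ≤ (A + B + C) * (A + B + C) := mul_le_mul h h (by positivity) (by positivity)
  nlinarith [sq_nonneg (A - B), sq_nonneg (A - C), sq_nonneg (B - C)]

lemma two_s_norm (s : ℝ) (hs : 0 ≤ s) (z : ℂ) : ‖(2 : ℂ) * (s : ℂ) * z‖ = 2 * s * ‖z‖ := by
  rw [norm_mul, norm_mul, Complex.norm_real, Real.norm_eq_abs, _root_.abs_of_nonneg hs]
  norm_num

end BBaux


open BBaux in
set_option maxHeartbeats 2000000 in
/-- fractional Bourgain–Brezis inequality in 1D.
A distribution `u` on `S¹` is represented by its Fourier coefficients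
`u : ℤ → ℂ` (of at most polynomial growth).  If `(-Δ)^{1/4}u` and
`R(-Δ)^{1/4}u` decompose as `f + ĝ` with `f ∈ Ḣ^{-1/2}(S¹)` and `g ∈ L¹(S¹)`,
then `u` minus its mean is in `L²(S¹)` and
`‖u - ⨍u‖_{L²} ≤ C (‖f₁‖_{Ḣ^{-1/2}} + ‖g₁‖_{L¹} + ‖f₂‖_{Ḣ^{-1/2}} + ‖g₂‖_{L¹})`
for every such decomposition, with `C` independent of `u`; taking the infimum
over decompositions this is the bound by the `Ḣ^{-1/2} + L¹` norms. -/
theorem fractional_bourgain_brezis_1D :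
    ∃ C : ℝ, 0 < C ∧
      ∀ (u f₁ f₂ : ℤ → ℂ) (g₁ g₂ : AddCircle (2 * Real.pi) → ℂ),
        (∃ N : ℕ, ∃ A : ℝ, ∀ n : ℤ, ‖u n‖ ≤ A * (1 + |(n : ℝ)|) ^ N) →
        Integrable g₁ volume → Integrable g₂ volume →
        f₁ 0 = 0 → f₂ 0 = 0 →
        Summable (fun n : ℤ => if n = 0 then (0 : ℝ) else ‖f₁ n‖ ^ 2 / |(n : ℝ)|) →
        Summable (fun n : ℤ => if n = 0 then (0 : ℝ) else ‖f₂ n‖ ^ 2 / |(n : ℝ)|) →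
        (∀ n : ℤ, (Real.sqrt |(n : ℝ)| : ℂ) * u n = f₁ n + fourierCoeff g₁ n) →
        (∀ n : ℤ, Complex.I * (Int.sign n : ℂ) * (Real.sqrt |(n : ℝ)| : ℂ) * u n
            = f₂ n + fourierCoeff g₂ n) →
        Summable (fun n : ℤ => if n = 0 then (0 : ℝ) else ‖u n‖ ^ 2) ∧
        Real.sqrt (∑' n : ℤ, if n = 0 then (0 : ℝ) else ‖u n‖ ^ 2) ≤
          C * (Real.sqrt (∑' n : ℤ, if n = 0 then (0 : ℝ) else ‖f₁ n‖ ^ 2 / |(n : ℝ)|)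
              + (∫ x, ‖g₁ x‖ ∂volume)
              + Real.sqrt (∑' n : ℤ, if n = 0 then (0 : ℝ) else ‖f₂ n‖ ^ 2 / |(n : ℝ)|)
              + (∫ x, ‖g₂ x‖ ∂volume)) := by
  refine ⟨100, by norm_num, ?_⟩
  intro u f₁ f₂ g₁ g₂ _ hg₁v hg₂v hf₁0 hf₂0 hSf₁ hSf₂ heq₁ heq₂
  have hg₁ : Integrable g₁ AddCircle.haarAddCircle := integrable_haar hg₁v
  have hg₂ : Integrable g₂ AddCircle.haarAddCircle := integrable_haar hg₂v
  set G : AddCircle (2 * Real.pi) → ℂ := fun x => g₁ x + Complex.I * g₂ x with hGdef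
  set H : AddCircle (2 * Real.pi) → ℂ := fun x => g₁ x + (-Complex.I) * g₂ x with hHdef
  have hGint : Integrable G AddCircle.haarAddCircle := hg₁.add (hg₂.const_mul _)
  have hHint : Integrable H AddCircle.haarAddCircle := hg₁.add (hg₂.const_mul _)
  have hcG : ∀ n : ℤ, fourierCoeff G n = fourierCoeff g₁ n + Complex.I * fourierCoeff g₂ n :=
    fun n => fourierCoeff_add_mul hg₁ hg₂ _ n
  have hcH : ∀ n : ℤ, fourierCoeff H n = fourierCoeff g₁ n + (-Complex.I) * fourierCoeff g₂ n :=
    fun n => fourierCoeff_add_mul hg₁ hg₂ _ n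
  -- coefficient identities
  have kG : ∀ n : ℤ, 0 < n → fourierCoeff G n = -(f₁ n + Complex.I * f₂ n) := by
    intro n hn
    have e1 := heq₁ n
    have e2 := heq₂ n
    rw [Int.sign_eq_one_iff_pos.mpr hn] at e2
    push_cast at e2
    rw [hcG n]
    linear_combination -e1 - Complex.I * e2 + ((Real.sqrt |(n : ℝ)| : ℂ) * u n) * Complex.I_sq
  have kH : ∀ n : ℤ, n < 0 → fourierCoeff H n = -(f₁ n - Complex.I * f₂ n) := by
    intro n hn
    have e1 := heq₁ n
    have e2 := heq₂ n
    rw [Int.sign_eq_neg_one_iff_neg.mpr hn] at e2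
    push_cast at e2
    rw [hcH n]
    linear_combination -e1 + Complex.I * e2 + ((Real.sqrt |(n : ℝ)| : ℂ) * u n) * Complex.I_sq
  have idH : ∀ n : ℤ, 0 < n → (2 : ℂ) * (Real.sqrt |(n : ℝ)| : ℂ) * u n
      = fourierCoeff H n + f₁ n + -(Complex.I * f₂ n) := by
    intro n hn
    have e1 := heq₁ n
    have e2 := heq₂ n
    rw [Int.sign_eq_one_iff_pos.mpr hn] at e2
    push_cast at e2
    rw [hcH n]
    linear_combination e1 - Complex.I * e2 + ((Real.sqrt |(n : ℝ)| : ℂ) * u n) * Complex.I_sq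
  have idG : ∀ n : ℤ, n < 0 → (2 : ℂ) * (Real.sqrt |(n : ℝ)| : ℂ) * u n
      = fourierCoeff G n + f₁ n + Complex.I * f₂ n := by
    intro n hn
    have e1 := heq₁ n
    have e2 := heq₂ n
    rw [Int.sign_eq_neg_one_iff_neg.mpr hn] at e2
    push_cast at e2
    rw [hcG n]
    linear_combination e1 + Complex.I * e2 + ((Real.sqrt |(n : ℝ)| : ℂ) * u n) * Complex.I_sq
  -- pointwise bound for ‖u n‖²
  have hub : ∀ n : ℤ, (if n = 0 then (0:ℝ) else ‖u n‖ ^ 2)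
      ≤ Pside H n + Nside G n
        + ((if n = 0 then (0:ℝ) else ‖f₁ n‖ ^ 2 / |(n : ℝ)|)
        + (if n = 0 then (0:ℝ) else ‖f₂ n‖ ^ 2 / |(n : ℝ)|)) := by
    intro n
    rcases lt_trichotomy n 0 with hn | hn | hn
    · rw [if_neg (by omega), if_neg (by omega), if_neg (by omega)]
      unfold Pside Nside
      rw [if_neg (by omega), if_pos hn]
      have key : 2 * Real.sqrt |(n : ℝ)| * ‖u n‖
          ≤ ‖fourierCoeff G n‖ + ‖f₁ n‖ + ‖f₂ n‖ := by
        have h1 := idG n hn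
        have h2 : ‖(2 : ℂ) * (Real.sqrt |(n : ℝ)| : ℂ) * u n‖
            = 2 * Real.sqrt |(n : ℝ)| * ‖u n‖ := two_s_norm _ (Real.sqrt_nonneg _) _
        rw [h1] at h2
        rw [← h2]
        refine (norm_add₃_le).trans ?_
        rw [norm_mul, Complex.norm_I, one_mul]
      have h3 := sq_bound (by omega) (norm_nonneg (u n)) (norm_nonneg (fourierCoeff G n))
        (norm_nonneg (f₁ n)) (norm_nonneg (f₂ n)) key
      linarith
    · subst hn
      unfold Pside Nside
      simp
    · rw [if_neg (by omega), if_neg (by omega), if_neg (by omega)]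
      unfold Pside Nside
      rw [if_pos hn, if_neg (by omega)]
      have key : 2 * Real.sqrt |(n : ℝ)| * ‖u n‖
          ≤ ‖fourierCoeff H n‖ + ‖f₁ n‖ + ‖f₂ n‖ := by
        have h1 := idH n hn
        have h2 : ‖(2 : ℂ) * (Real.sqrt |(n : ℝ)| : ℂ) * u n‖
            = 2 * Real.sqrt |(n : ℝ)| * ‖u n‖ := two_s_norm _ (Real.sqrt_nonneg _) _
        rw [h1] at h2
        rw [← h2]
        refine (norm_add₃_le).trans ?_
        rw [norm_neg, norm_mul, Complex.norm_I, one_mul]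
      have h3 := sq_bound (by omega) (norm_nonneg (u n)) (norm_nonneg (fourierCoeff H n))
        (norm_nonneg (f₁ n)) (norm_nonneg (f₂ n)) key
      linarith
  -- nonnegativity helpers
  have hifnn : ∀ (f : ℤ → ℂ) (n : ℤ),
      0 ≤ (if n = 0 then (0:ℝ) else ‖f n‖ ^ 2 / |(n : ℝ)|) := by
    intro f n
    split
    · exact le_refl 0
    · positivity
  -- known sides are controlled by the f's
  have hmaj : ∀ (z : ℂ) (n : ℤ), n ≠ 0 → ‖z‖ ≤ ‖f₁ n‖ + ‖f₂ n‖ →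
      ‖z‖ ^ 2 / |(n : ℝ)|
        ≤ 2 * (if n = 0 then (0:ℝ) else ‖f₁ n‖ ^ 2 / |(n : ℝ)|)
          + 2 * (if n = 0 then (0:ℝ) else ‖f₂ n‖ ^ 2 / |(n : ℝ)|) := by
    intro z n hn h1
    rw [if_neg hn, if_neg hn]
    have h2 : (0:ℝ) < |(n : ℝ)| := by
      have : (n:ℝ) ≠ 0 := by exact_mod_cast hn
      positivity
    have h3 : ‖z‖ ^ 2 ≤ 2 * ‖f₁ n‖ ^ 2 + 2 * ‖f₂ n‖ ^ 2 := by
      nlinarith [norm_nonneg z, norm_nonneg (f₁ n), norm_nonneg (f₂ n),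
        sq_nonneg (‖f₁ n‖ - ‖f₂ n‖)]
    calc ‖z‖ ^ 2 / |(n : ℝ)| ≤ (2 * ‖f₁ n‖ ^ 2 + 2 * ‖f₂ n‖ ^ 2) / |(n : ℝ)| := by gcongr
      _ = 2 * (‖f₁ n‖ ^ 2 / |(n : ℝ)|) + 2 * (‖f₂ n‖ ^ 2 / |(n : ℝ)|) := by ring
  have hmajsum : Summable (fun n : ℤ =>
      2 * (if n = 0 then (0:ℝ) else ‖f₁ n‖ ^ 2 / |(n : ℝ)|)
        + 2 * (if n = 0 then (0:ℝ) else ‖f₂ n‖ ^ 2 / |(n : ℝ)|)) :=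
    (hSf₁.mul_left 2).add (hSf₂.mul_left 2)
  have hPGsum : Summable (Pside G) := by
    apply Summable.of_nonneg_of_le (Pside_nonneg G) (fun n => ?_) hmajsum
    unfold Pside
    split
    · rename_i hn
      refine hmaj (fourierCoeff G n) n (by omega) ?_
      rw [kG n hn, norm_neg]
      refine (norm_add_le _ _).trans ?_
      rw [norm_mul, Complex.norm_I, one_mul]
    · have h1 := hifnn f₁ n
      have h2 := hifnn f₂ n
      linarith
  have hNHsum : Summable (Nside H) := by
    apply Summable.of_nonneg_of_le (Nside_nonneg H) (fun n => ?_) hmajsum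
    unfold Nside
    split
    · rename_i hn
      refine hmaj (fourierCoeff H n) n (by omega) ?_
      rw [kH n hn, norm_neg, sub_eq_add_neg]
      refine (norm_add_le _ _).trans ?_
      rw [norm_neg, norm_mul, Complex.norm_I, one_mul]
    · have h1 := hifnn f₁ n
      have h2 := hifnn f₂ n
      linarith
  obtain ⟨hNGsum, hNGbound⟩ := transfer_pos G hGint hPGsum
  obtain ⟨hPHsum, hPHbound⟩ := transfer_neg H hHint hNHsum
  -- abbreviations for the final numerical estimate
  set S₁ : ℝ := ∑' n : ℤ, (if n = 0 then (0:ℝ) else ‖f₁ n‖ ^ 2 / |(n : ℝ)|) with hS₁def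
  set S₂ : ℝ := ∑' n : ℤ, (if n = 0 then (0:ℝ) else ‖f₂ n‖ ^ 2 / |(n : ℝ)|) with hS₂def
  set I₁ : ℝ := ∫ x, ‖g₁ x‖ ∂volume with hI₁def
  set I₂ : ℝ := ∫ x, ‖g₂ x‖ ∂volume with hI₂def
  have hS₁0 : 0 ≤ S₁ := tsum_nonneg (fun n => hifnn f₁ n)
  have hS₂0 : 0 ≤ S₂ := tsum_nonneg (fun n => hifnn f₂ n)
  have hI₁0 : 0 ≤ I₁ := integral_nonneg fun x => norm_nonneg _
  have hI₂0 : 0 ≤ I₂ := integral_nonneg fun x => norm_nonneg _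
  -- tsum bound on the known sides
  have htsum_maj : ∑' n : ℤ, (2 * (if n = 0 then (0:ℝ) else ‖f₁ n‖ ^ 2 / |(n : ℝ)|)
      + 2 * (if n = 0 then (0:ℝ) else ‖f₂ n‖ ^ 2 / |(n : ℝ)|)) = 2 * S₁ + 2 * S₂ := by
    rw [Summable.tsum_add (hSf₁.mul_left 2) (hSf₂.mul_left 2), tsum_mul_left, tsum_mul_left]
  have hPGt : ∑' n : ℤ, Pside G n ≤ 2 * S₁ + 2 * S₂ := by
    rw [← htsum_maj]
    apply Summable.tsum_le_tsum (fun n => ?_) hPGsum hmajsum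
    unfold Pside
    split
    · rename_i hn
      refine hmaj (fourierCoeff G n) n (by omega) ?_
      rw [kG n hn, norm_neg]
      refine (norm_add_le _ _).trans ?_
      rw [norm_mul, Complex.norm_I, one_mul]
    · have h1 := hifnn f₁ n
      have h2 := hifnn f₂ n
      linarith
  have hNHt : ∑' n : ℤ, Nside H n ≤ 2 * S₁ + 2 * S₂ := by
    rw [← htsum_maj]
    apply Summable.tsum_le_tsum (fun n => ?_) hNHsum hmajsum
    unfold Nside
    split
    · rename_i hn
      refine hmaj (fourierCoeff H n) n (by omega) ?_
      rw [kH n hn, norm_neg, sub_eq_add_neg]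
      refine (norm_add_le _ _).trans ?_
      rw [norm_neg, norm_mul, Complex.norm_I, one_mul]
    · have h1 := hifnn f₁ n
      have h2 := hifnn f₂ n
      linarith
  -- L¹ bounds
  have hMG : ∫ x, ‖G x‖ ∂AddCircle.haarAddCircle ≤ I₁ + I₂ := by
    refine (integral_norm_haar_le G).trans ?_
    have hGv : Integrable G volume := hg₁v.add (hg₂v.const_mul _)
    rw [hI₁def, hI₂def, ← integral_add hg₁v.norm hg₂v.norm]
    apply integral_mono hGv.norm (hg₁v.norm.add hg₂v.norm)
    intro x
    rw [Pi.add_apply]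
    simp only [hGdef]
    refine (norm_add_le _ _).trans ?_
    rw [norm_mul, Complex.norm_I, one_mul]
  have hMH : ∫ x, ‖H x‖ ∂AddCircle.haarAddCircle ≤ I₁ + I₂ := by
    refine (integral_norm_haar_le H).trans ?_
    have hHv : Integrable H volume := hg₁v.add (hg₂v.const_mul _)
    rw [hI₁def, hI₂def, ← integral_add hg₁v.norm hg₂v.norm]
    apply integral_mono hHv.norm (hg₁v.norm.add hg₂v.norm)
    intro x
    rw [Pi.add_apply]
    simp only [hHdef]
    refine (norm_add_le _ _).trans ?_
    rw [norm_mul, norm_neg, Complex.norm_I, one_mul]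
  have hMG0 : 0 ≤ ∫ x, ‖G x‖ ∂AddCircle.haarAddCircle := integral_nonneg fun x => norm_nonneg _
  have hMH0 : 0 ≤ ∫ x, ‖H x‖ ∂AddCircle.haarAddCircle := integral_nonneg fun x => norm_nonneg _
  -- the sum over the unknown sides
  have hpi8 : 2 * Real.pi ≤ 8 := by nlinarith [Real.pi_le_four]
  have hNGt : ∑' n : ℤ, Nside G n ≤ 2 * S₁ + 2 * S₂ + 8 * (I₁ + I₂) ^ 2 := by
    have h1 : 2 * Real.pi * (∫ x, ‖G x‖ ∂AddCircle.haarAddCircle) ^ 2 ≤ 8 * (I₁ + I₂) ^ 2 := by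
      have h2 : (∫ x, ‖G x‖ ∂AddCircle.haarAddCircle) ^ 2 ≤ (I₁ + I₂) ^ 2 := by
        nlinarith
      nlinarith [Real.pi_pos, sq_nonneg (∫ x, ‖G x‖ ∂AddCircle.haarAddCircle)]
    linarith
  have hPHt : ∑' n : ℤ, Pside H n ≤ 2 * S₁ + 2 * S₂ + 8 * (I₁ + I₂) ^ 2 := by
    have h1 : 2 * Real.pi * (∫ x, ‖H x‖ ∂AddCircle.haarAddCircle) ^ 2 ≤ 8 * (I₁ + I₂) ^ 2 := by
      have h2 : (∫ x, ‖H x‖ ∂AddCircle.haarAddCircle) ^ 2 ≤ (I₁ + I₂) ^ 2 := by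
        nlinarith
      nlinarith [Real.pi_pos, sq_nonneg (∫ x, ‖H x‖ ∂AddCircle.haarAddCircle)]
    linarith
  -- summability of the goal sequence
  have hUmajsum : Summable (fun n : ℤ => Pside H n + Nside G n
      + ((if n = 0 then (0:ℝ) else ‖f₁ n‖ ^ 2 / |(n : ℝ)|)
        + (if n = 0 then (0:ℝ) else ‖f₂ n‖ ^ 2 / |(n : ℝ)|))) :=
    (hPHsum.add hNGsum).add (hSf₁.add hSf₂)
  have hUnn : ∀ n : ℤ, 0 ≤ (if n = 0 then (0:ℝ) else ‖u n‖ ^ 2) := by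
    intro n
    split
    · exact le_refl 0
    · positivity
  have hUsum : Summable (fun n : ℤ => if n = 0 then (0:ℝ) else ‖u n‖ ^ 2) :=
    Summable.of_nonneg_of_le hUnn hub hUmajsum
  refine ⟨hUsum, ?_⟩
  -- the numerical endgame
  have hUt : (∑' n : ℤ, if n = 0 then (0:ℝ) else ‖u n‖ ^ 2)
      ≤ 5 * S₁ + 5 * S₂ + 16 * (I₁ + I₂) ^ 2 := by
    have h1 : (∑' n : ℤ, if n = 0 then (0:ℝ) else ‖u n‖ ^ 2)
        ≤ ∑' n : ℤ, (Pside H n + Nside G n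
          + ((if n = 0 then (0:ℝ) else ‖f₁ n‖ ^ 2 / |(n : ℝ)|)
            + (if n = 0 then (0:ℝ) else ‖f₂ n‖ ^ 2 / |(n : ℝ)|))) :=
      Summable.tsum_le_tsum hub hUsum hUmajsum
    have h2 : ∑' n : ℤ, (Pside H n + Nside G n
        + ((if n = 0 then (0:ℝ) else ‖f₁ n‖ ^ 2 / |(n : ℝ)|)
          + (if n = 0 then (0:ℝ) else ‖f₂ n‖ ^ 2 / |(n : ℝ)|)))
        = (∑' n : ℤ, Pside H n) + (∑' n : ℤ, Nside G n) + (S₁ + S₂) := by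
      rw [Summable.tsum_add (hPHsum.add hNGsum) (hSf₁.add hSf₂), Summable.tsum_add hPHsum hNGsum,
        Summable.tsum_add hSf₁ hSf₂]
    rw [h2] at h1
    linarith
  set X : ℝ := Real.sqrt S₁ + I₁ + Real.sqrt S₂ + I₂ with hXdef
  have hX0 : 0 ≤ X := by
    have := Real.sqrt_nonneg S₁
    have := Real.sqrt_nonneg S₂
    linarith
  have hXsq : (∑' n : ℤ, if n = 0 then (0:ℝ) else ‖u n‖ ^ 2) ≤ (100 * X) ^ 2 := by
    have e1 : Real.sqrt S₁ ^ 2 = S₁ := Real.sq_sqrt hS₁0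
    have e2 : Real.sqrt S₂ ^ 2 = S₂ := Real.sq_sqrt hS₂0
    have h1 : S₁ ≤ X ^ 2 := by nlinarith [Real.sqrt_nonneg S₁, Real.sqrt_nonneg S₂]
    have h2 : S₂ ≤ X ^ 2 := by nlinarith [Real.sqrt_nonneg S₁, Real.sqrt_nonneg S₂]
    have h3 : (I₁ + I₂) ^ 2 ≤ X ^ 2 := by
      nlinarith [Real.sqrt_nonneg S₁, Real.sqrt_nonneg S₂]
    have h4 : (100 * X) ^ 2 = 10000 * X ^ 2 := by ring
    rw [h4]
    nlinarith [sq_nonneg X]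
  calc Real.sqrt (∑' n : ℤ, if n = 0 then (0:ℝ) else ‖u n‖ ^ 2)
      ≤ Real.sqrt ((100 * X) ^ 2) := Real.sqrt_le_sqrt hXsq
    _ = 100 * X := Real.sqrt_sq (by linarith)
    _ = 100 * (Real.sqrt S₁ + I₁ + Real.sqrt S₂ + I₂) := by rw [hXdef]
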